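/- arXiv:2107.03877 — 2 statements merged into one kernel-verified Lean document; each statement's English description precedes it below -/
import Mathlib

section
/- Let E and E' be finite-dimensional real normed vector spaces, W ⊆ E an open set, and h : E → E' a map that is continuously differentiable on W, admits a continuously differentiable inverse on its image (i.e., h(W) is open in E' and there is a map g : E' → E, continuously differentiable on h(W), with g(h(z)) = z for all z ∈ W and h(g(z')) = z' for all z' ∈ h(W)). Let X ⊆ E, let x ∈ X ∩ W, and set Y = h(X ∩ W). If Y is Clarke regular at every point of Y — i.e., for every y ∈ Y and every sequence (y_k) in Y converging to y one has T_yY ⊆ liminf_k T_{y_k}Y — then X is Clarke regular at x: for every sequence (x_k) in X converging to x, T_xX ⊆ liminf_k T_{x_k}X. -/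
open Filter Topology Set Asymptotics

/-- The Bouligand tangent cone of `S` at `p`: vectors `v` for which there are a sequence `(p_k)`
in `S` and positive reals `τ_k → 0` with `(p_k − p)/τ_k → v`. -/
def bTangentCone {E : Type*} [NormedAddCommGroup E] [NormedSpace ℝ E]
    (S : Set E) (p : E) : Set E :=
  {v | ∃ (pk : ℕ → E) (τ : ℕ → ℝ), (∀ k, pk k ∈ S) ∧ (∀ k, 0 < τ k) ∧
    Tendsto τ atTop (𝓝 0) ∧ Tendsto (fun k => (τ k)⁻¹ • (pk k - p)) atTop (𝓝 v)}

/-- The inner limit `liminf_k S_k`: points `u` for which there exist `u_k ∈ S_k` with `u_k → u`. -/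
def innerLimit {E : Type*} [NormedAddCommGroup E] (S : ℕ → Set E) : Set E :=
  {u | ∃ uk : ℕ → E, (∀ k, uk k ∈ S k) ∧ Tendsto uk atTop (𝓝 u)}

/-!
Clarke regularity is transported along the C¹ diffeomorphism `g : h(W) → W`. Given `x_k → x` in
`X` and `v ∈ T_x X`, the chain rule pushes `v` to `Dh(x) v ∈ T_{h x} Y`; regularity of `Y` along
`h(x_k) → h(x)` yields `w_k ∈ T_{h(x_k)} Y` with `w_k → Dh(x) v`, and the chain rule pulls these
back to `Dg(h(x_k)) w_k ∈ T_{x_k} X`. By continuity of `Dg` these converge to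
`Dg(h x) (Dh(x) v) = v`.
-/

lemma mem_innerLimit_of_eventually {E : Type*} [NormedAddCommGroup E] {S : ℕ → Set E}
    (hS : ∀ k, (S k).Nonempty) {uk : ℕ → E} {u : E} (hmem : ∀ᶠ k in atTop, uk k ∈ S k)
    (hlim : Tendsto uk atTop (𝓝 u)) : u ∈ innerLimit S := by
  classical
  refine ⟨fun k => if uk k ∈ S k then uk k else (hS k).some, fun k => ?_, ?_⟩
  · dsimp only
    split_ifs with hk
    exacts [hk, (hS k).some_mem]
  · exact hlim.congr' (hmem.mono fun k hk => (if_pos hk).symm)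

section TangentCone

variable {E F : Type*} [NormedAddCommGroup E] [NormedSpace ℝ E]
  [NormedAddCommGroup F] [NormedSpace ℝ F]

lemma isBigO_sub_of_tendsto_inv_smul_sub {α : Type*} {l : Filter α} {pk : α → E} {τ : α → ℝ}
    {p v : E} (hτ : ∀ k, τ k ≠ 0) (hlim : Tendsto (fun k => (τ k)⁻¹ • (pk k - p)) l (𝓝 v)) :
    (fun k => pk k - p) =O[l] τ := by
  have := (isBigO_refl τ l).smul (hlim.isBigO_one ℝ)
  simp only [smul_eq_mul, mul_one] at this
  refine this.congr_left fun k => ?_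
  rw [smul_smul, mul_inv_cancel₀ (hτ k), one_smul]

lemma tendsto_of_tendsto_inv_smul_sub {α : Type*} {l : Filter α} {pk : α → E} {τ : α → ℝ}
    {p v : E} (hτ : ∀ k, τ k ≠ 0) (hτ0 : Tendsto τ l (𝓝 0))
    (hlim : Tendsto (fun k => (τ k)⁻¹ • (pk k - p)) l (𝓝 v)) : Tendsto pk l (𝓝 p) := by
  have := ((isBigO_sub_of_tendsto_inv_smul_sub hτ hlim).trans_tendsto hτ0).add_const p
  rw [zero_add] at this
  exact this.congr fun k => sub_add_cancel (pk k) p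

lemma bTangentCone_inter_of_mem_nhds {S W : Set E} {p : E} (hW : W ∈ 𝓝 p) :
    bTangentCone (S ∩ W) p = bTangentCone S p := by
  refine Subset.antisymm (fun v ⟨pk, τ, hmem, hpos, hτ, hlim⟩ =>
    ⟨pk, τ, fun k => (hmem k).1, hpos, hτ, hlim⟩) ?_
  rintro v ⟨pk, τ, hmem, hpos, hτ, hlim⟩
  have hpkW := (tendsto_of_tendsto_inv_smul_sub (fun k => (hpos k).ne') hτ hlim).eventually hW
  obtain ⟨N, hN⟩ := eventually_atTop.1 hpkW
  exact ⟨fun k => pk (k + N), fun k => τ (k + N), fun k => ⟨hmem _, hN _ (Nat.le_add_left N k)⟩,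
    fun k => hpos _, (tendsto_add_atTop_iff_nat N).2 hτ, (tendsto_add_atTop_iff_nat N).2 hlim⟩

lemma zero_mem_bTangentCone {S : Set E} {p : E} (hp : p ∈ S) : (0 : E) ∈ bTangentCone S p :=
  ⟨fun _ => p, fun k => 1 / (k + 1), fun _ => hp, fun k => by positivity,
    tendsto_one_div_add_atTop_nhds_zero_nat, by simp⟩

lemma HasFDerivAt.mapsTo_bTangentCone {f : E → F} {A : E →L[ℝ] F} {p : E}
    (hf : HasFDerivAt f A p) {S : Set E} {T : Set F} (hST : MapsTo f S T) :
    MapsTo A (bTangentCone S p) (bTangentCone T (f p)) := by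
  rintro v ⟨pk, τ, hmem, hpos, hτ, hlim⟩
  refine ⟨fun k => f (pk k), τ, fun k => hST (hmem k), hpos, hτ, ?_⟩
  have hpk_sub := isBigO_sub_of_tendsto_inv_smul_sub (fun k => (hpos k).ne') hlim
  have hpk := tendsto_of_tendsto_inv_smul_sub (fun k => (hpos k).ne') hτ hlim
  have hrem : Tendsto (fun k => (τ k)⁻¹ • (f (pk k) - f p - A (pk k - p))) atTop (𝓝 0) :=
    ((hf.isLittleO.comp_tendsto hpk).trans_isBigO hpk_sub).tendsto_inv_smul_nhds_zero
  have := hrem.add ((A.continuous.tendsto v).comp hlim)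
  rw [zero_add] at this
  refine this.congr fun k => ?_
  simp only [Function.comp_apply, smul_sub, map_smul, map_sub]
  abel

lemma HasFDerivAt.comp_eq_id_of_leftInverse {f : E → F} {g : F → E} {A : E →L[ℝ] F}
    {B : F →L[ℝ] E} {x : E}
    (hf : HasFDerivAt f A x) (hg : HasFDerivAt g B (f x)) (hgf : ∀ᶠ z in 𝓝 x, g (f z) = z) :
    B.comp A = ContinuousLinearMap.id ℝ E :=
  (hg.comp x hf).unique ((hasFDerivAt_id x).congr_of_eventuallyEq hgf)

lemma mem_innerLimit_bTangentCone_of_hasFDerivAt {g : F → E} {g' : F → F →L[ℝ] E}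
    {Y : Set F} {X : Set E} (hYX : MapsTo g Y X) {y w : F}
    (hg : ∀ᶠ z in 𝓝 y, HasFDerivAt g (g' z) z) (hg' : ContinuousAt g' y)
    {yk wk : ℕ → F} {xk : ℕ → E} (hyk : Tendsto yk atTop (𝓝 y)) (hxk : ∀ k, xk k ∈ X)
    (hgyk : ∀ᶠ k in atTop, g (yk k) = xk k) (hwk : ∀ k, wk k ∈ bTangentCone Y (yk k))
    (hwk_lim : Tendsto wk atTop (𝓝 w)) :
    g' y w ∈ innerLimit fun k => bTangentCone X (xk k) := by
  refine mem_innerLimit_of_eventually (fun k => ⟨0, zero_mem_bTangentCone (hxk k)⟩)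
    (uk := fun k => g' (yk k) (wk k)) ?_ ?_
  · filter_upwards [hyk.eventually hg, hgyk] with k hgk hgyk_eq
    exact hgyk_eq ▸ hgk.mapsTo_bTangentCone hYX (hwk k)
  · exact (isBoundedBilinearMap_apply.continuous.tendsto _).comp
      ((hg'.tendsto.comp hyk).prodMk_nhds hwk_lim)

end TangentCone

theorem stmt15_general {E E' : Type*}
    [NormedAddCommGroup E] [NormedSpace ℝ E]
    [NormedAddCommGroup E'] [NormedSpace ℝ E']
    (W : Set E) (hW : IsOpen W) (h : E → E') (g : E' → E)
    (hh : ContDiffOn ℝ 1 h W) (hWopen : IsOpen (h '' W)) (hg : ContDiffOn ℝ 1 g (h '' W))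
    (hgh : ∀ z ∈ W, g (h z) = z)
    (X : Set E) (x : E) (hx : x ∈ X ∩ W)
    (hreg : ∀ y ∈ h '' (X ∩ W), ∀ yk : ℕ → E', (∀ k, yk k ∈ h '' (X ∩ W)) →
      Tendsto yk atTop (𝓝 y) →
      bTangentCone (h '' (X ∩ W)) y ⊆ innerLimit fun k => bTangentCone (h '' (X ∩ W)) (yk k)) :
    ∀ xk : ℕ → E, (∀ k, xk k ∈ X) → Tendsto xk atTop (𝓝 x) →
      bTangentCone X x ⊆ innerLimit fun k => bTangentCone X (xk k) := by
  intro xk hxkX hxk v hv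
  have hxW : W ∈ 𝓝 x := hW.mem_nhds hx.2
  have hyW : h '' W ∈ 𝓝 (h x) := hWopen.mem_nhds (mem_image_of_mem h hx.2)
  have hdh : HasFDerivAt h (fderiv ℝ h x) x :=
    ((hh.contDiffAt hxW).hasStrictFDerivAt one_ne_zero).hasFDerivAt
  have hdg : ∀ᶠ y in 𝓝 (h x), HasFDerivAt g (fderiv ℝ g y) y :=
    eventually_of_mem hyW fun y hy =>
      ((hg.contDiffAt (hWopen.mem_nhds hy)).hasStrictFDerivAt one_ne_zero).hasFDerivAt
  have hxkW : ∀ᶠ k in atTop, xk k ∈ W := hxk.eventually hxW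
  classical
  -- `h ∘ xk`, patched to stay in `h '' (X ∩ W)` at the finitely many `k` with `xk k ∉ W`
  set yk : ℕ → E' := fun k => if xk k ∈ W then h (xk k) else h x
  have hykY : ∀ k, yk k ∈ h '' (X ∩ W) := fun k => by
    simp only [yk]
    split_ifs with hk
    exacts [⟨xk k, ⟨hxkX k, hk⟩, rfl⟩, ⟨x, hx, rfl⟩]
  have hyk_lim : Tendsto yk atTop (𝓝 (h x)) :=
    (hdh.continuousAt.tendsto.comp hxk).congr' (hxkW.mono fun k hk => (if_pos hk).symm)
  obtain ⟨wk, hwk, hwk_lim⟩ := hreg (h x) ⟨x, hx, rfl⟩ yk hykY hyk_lim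
    (hdh.mapsTo_bTangentCone (mapsTo_image h _) (bTangentCone_inter_of_mem_nhds hxW ▸ hv))
  have hgX : MapsTo g (h '' (X ∩ W)) X := by
    rintro _ ⟨z, hz, rfl⟩
    exact (hgh z hz.2).symm ▸ hz.1
  have hinv : (fderiv ℝ g (h x)).comp (fderiv ℝ h x) = ContinuousLinearMap.id ℝ E :=
    hdh.comp_eq_id_of_leftInverse hdg.self_of_nhds (eventually_of_mem hxW hgh)
  have := mem_innerLimit_bTangentCone_of_hasFDerivAt hgX hdg
    ((hg.continuousOn_fderiv_of_isOpen hWopen le_rfl).continuousAt hyW) hyk_lim hxkX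
    (hxkW.mono fun k hk => by simp only [yk, if_pos hk, hgh _ hk]) hwk hwk_lim
  rwa [← ContinuousLinearMap.comp_apply, hinv, ContinuousLinearMap.id_apply] at this

/-- Let `E`, `E'` be finite-dimensional real normed vector spaces, `W ⊆ E` open, and
`h : E → E'` continuously differentiable on `W` with `h(W)` open and a continuously differentiable
inverse `g` on `h(W)`. Let `X ⊆ E`, `x ∈ X ∩ W`, and `Y = h(X ∩ W)`. If `Y` is Clarke regular at
every point of `Y` (for every `y ∈ Y` and every sequence `(y_k)` in `Y` converging to `y`,
`T_yY ⊆ liminf_k T_{y_k}Y`), then `X` is Clarke regular at `x`: for every sequence `(x_k)` in `X`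
converging to `x`, `T_xX ⊆ liminf_k T_{x_k}X`. -/
theorem stmt15 {E E' : Type*}
    [NormedAddCommGroup E] [NormedSpace ℝ E] [FiniteDimensional ℝ E]
    [NormedAddCommGroup E'] [NormedSpace ℝ E'] [FiniteDimensional ℝ E']
    (W : Set E) (hW : IsOpen W) (h : E → E') (g : E' → E)
    (hh : ContDiffOn ℝ 1 h W) (hWopen : IsOpen (h '' W)) (hg : ContDiffOn ℝ 1 g (h '' W))
    (hgh : ∀ z ∈ W, g (h z) = z) (hhg : ∀ z' ∈ h '' W, h (g z') = z')
    (X : Set E) (x : E) (hx : x ∈ X ∩ W)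
    (hreg : ∀ y ∈ h '' (X ∩ W), ∀ yk : ℕ → E', (∀ k, yk k ∈ h '' (X ∩ W)) →
      Tendsto yk atTop (𝓝 y) →
      bTangentCone (h '' (X ∩ W)) y ⊆ innerLimit fun k => bTangentCone (h '' (X ∩ W)) (yk k)) :
    ∀ xk : ℕ → E, (∀ k, xk k ∈ X) → Tendsto xk atTop (𝓝 x) →
      bTangentCone X x ⊆ innerLimit fun k => bTangentCone X (xk k) :=
  stmt15_general W hW h g hh hWopen hg hgh X x hx hreg
end

section
/- Let E' and E be finite-dimensional real normed vector spaces, V ⊆ E' an open set, and h : E' → E a map that is continuously differentiable on V, such that h(V) is open in E and there is a map g : E → E', continuously differentiable on h(V), with g(h(z)) = z for all z ∈ V and h(g(z')) = z' for all z' ∈ h(V). Let Y ⊆ V, y ∈ Y, and x = h(y). Then the derivative D h(y) : E' → E is a bijective linear map, and it maps the tangent cone T_yY bijectively onto the tangent cone T_x(h(Y)); in particular, the image of T_yY under D h(y) equals T_x(h(Y)). -/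
/-!
A differentiable map sends Bouligand tangent cones into tangent cones through its derivative:
if `τₖ⁻¹ (pₖ - y) → v`, then `τₖ⁻¹ (f pₖ - f y) → f' v`, the remainder being `o(‖pₖ - y‖) = o(τₖ)`.
Since `g ∘ h = id` near `y` and `h ∘ g = id` near `h y`, the chain rule makes `D g(h y)` a
two-sided inverse of `D h(y)`; applying the mapping property to `h` and to `g` then gives the
bijection between the cones.
-/

open Filter Topology

section

variable {E' E : Type*} [NormedAddCommGroup E'] [NormedSpace ℝ E']
  [NormedAddCommGroup E] [NormedSpace ℝ E]

theorem HasFDerivWithinAt.mapsTo_bTangentCone {f : E' → E} {f' : E' →L[ℝ] E} {S : Set E'}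
    {y : E'} (hf : HasFDerivWithinAt f f' S y) :
    Set.MapsTo f' (bTangentCone S y) (bTangentCone (f '' S) (f y)) := by
  rintro v ⟨pk, τ, hmem, hpos, hτ, hlim⟩
  have hO : (fun k => pk k - y) =O[atTop] τ := by
    simpa [smul_smul, (hpos _).ne'] using
      (Asymptotics.isBigO_refl τ atTop).smul (hlim.isBigO_one ℝ)
  have hpk : Tendsto pk atTop (𝓝[S] y) := tendsto_nhdsWithin_iff.2
    ⟨tendsto_sub_nhds_zero_iff.1 (hO.trans_tendsto hτ), .of_forall hmem⟩
  have herr : Tendsto (fun k => (τ k)⁻¹ • (f (pk k) - f y - f' (pk k - y))) atTop (𝓝 0) :=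
    ((hf.isLittleO.comp_tendsto hpk).trans_isBigO hO).tendsto_inv_smul_nhds_zero
  refine ⟨fun k => f (pk k), τ, fun k => ⟨pk k, hmem k, rfl⟩, hpos, hτ, ?_⟩
  simpa [smul_sub] using herr.add ((f'.continuous.tendsto v).comp hlim)

theorem HasFDerivAt.leftInverse_of_eventually_leftInverse {f : E' → E} {g : E → E'}
    {f' : E' →L[ℝ] E} {g' : E →L[ℝ] E'} {x : E'} (hf : HasFDerivAt f f' x)
    (hg : HasFDerivAt g g' (f x)) (hgf : ∀ᶠ z in 𝓝 x, g (f z) = z) :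
    Function.LeftInverse g' f' := fun v => by
  have := (hg.comp x hf).unique ((hasFDerivAt_id x).congr_of_eventuallyEq hgf)
  exact congr($this v)

end

theorem stmt16_general {E' E : Type*}
    [NormedAddCommGroup E'] [NormedSpace ℝ E']
    [NormedAddCommGroup E] [NormedSpace ℝ E]
    (V : Set E') (hV : IsOpen V) (h : E' → E) (g : E → E')
    (hh : ContDiffOn ℝ 1 h V) (hVopen : IsOpen (h '' V)) (hg : ContDiffOn ℝ 1 g (h '' V))
    (hgh : ∀ z ∈ V, g (h z) = z) (hhg : ∀ z' ∈ h '' V, h (g z') = z')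
    (Y : Set E') (hY : Y ⊆ V) (y : E') (hy : y ∈ Y) :
    Function.Bijective (fderiv ℝ h y) ∧
    Set.BijOn (fderiv ℝ h y) (bTangentCone Y y) (bTangentCone (h '' Y) (h y)) ∧
    fderiv ℝ h y '' bTangentCone Y y = bTangentCone (h '' Y) (h y) := by
  have hyV : y ∈ V := hY hy
  have hV_nhds : V ∈ 𝓝 y := hV.mem_nhds hyV
  have hhV_nhds : h '' V ∈ 𝓝 (h y) := hVopen.mem_nhds ⟨y, hyV, rfl⟩
  have hdh : HasFDerivAt h (fderiv ℝ h y) y :=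
    ((hh.contDiffAt hV_nhds).differentiableAt one_ne_zero).hasFDerivAt
  have hdg : HasFDerivAt g (fderiv ℝ g (h y)) (h y) :=
    ((hg.contDiffAt hhV_nhds).differentiableAt one_ne_zero).hasFDerivAt
  have hleft : Function.LeftInverse (fderiv ℝ g (h y)) (fderiv ℝ h y) :=
    hdh.leftInverse_of_eventually_leftInverse hdg (eventually_of_mem hV_nhds hgh)
  have hright : Function.RightInverse (fderiv ℝ g (h y)) (fderiv ℝ h y) :=
    hdg.leftInverse_of_eventually_leftInverse ((hgh y hyV).symm ▸ hdh)
      (eventually_of_mem hhV_nhds hhg)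
  have hgY : g '' (h '' Y) = Y := Set.LeftInvOn.image_image fun z hz => hgh z (hY hz)
  have hcones : Set.BijOn (fderiv ℝ h y) (bTangentCone Y y) (bTangentCone (h '' Y) (h y)) := by
    refine Set.InvOn.bijOn ⟨hleft.leftInvOn _, hright.leftInvOn _⟩
      hdh.hasFDerivWithinAt.mapsTo_bTangentCone ?_
    simpa only [hgY, hgh y hyV] using hdg.hasFDerivWithinAt.mapsTo_bTangentCone (S := h '' Y)
  exact ⟨⟨hleft.injective, hright.surjective⟩, hcones, hcones.image_eq⟩

/-- Let `E'`, `E` be finite-dimensional real normed vector spaces, `V ⊆ E'` open,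
and `h : E' → E` continuously differentiable on `V`, with `h(V)` open and a continuously
differentiable inverse `g` on `h(V)`. Let `Y ⊆ V`, `y ∈ Y`, `x = h(y)`. Then the derivative
`D h(y) : E' → E` is a bijective linear map, and it maps the tangent cone `T_yY` bijectively onto
the tangent cone `T_x(h(Y))`; in particular the image of `T_yY` under `D h(y)` equals
`T_x(h(Y))`. -/
theorem stmt16 {E' E : Type*}
    [NormedAddCommGroup E'] [NormedSpace ℝ E'] [FiniteDimensional ℝ E']
    [NormedAddCommGroup E] [NormedSpace ℝ E] [FiniteDimensional ℝ E]
    (V : Set E') (hV : IsOpen V) (h : E' → E) (g : E → E')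
    (hh : ContDiffOn ℝ 1 h V) (hVopen : IsOpen (h '' V)) (hg : ContDiffOn ℝ 1 g (h '' V))
    (hgh : ∀ z ∈ V, g (h z) = z) (hhg : ∀ z' ∈ h '' V, h (g z') = z')
    (Y : Set E') (hY : Y ⊆ V) (y : E') (hy : y ∈ Y) :
    Function.Bijective (fderiv ℝ h y) ∧
    Set.BijOn (fderiv ℝ h y) (bTangentCone Y y) (bTangentCone (h '' Y) (h y)) ∧
    fderiv ℝ h y '' bTangentCone Y y = bTangentCone (h '' Y) (h y) :=
  stmt16_general V hV h g hh hVopen hg hgh hhg Y hY y hy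
end
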